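/- Let Q : [0, ∞) → ℝ be differentiable with Q(0) = Q⁰ > 0, and suppose Q'(t) ≥ 2κ(t)·Q(t)² where κ : [0,∞) → ℝ is continuous and strictly positive. If additionally Q(t) ≤ C(1+t)² for all t ≥ 0 (for some constant C), then ∫_0^∞ κ(t) dt ≤ 1/(2Q⁰). -/

import Mathlib

open MeasureTheory

/-! Along the Riccati inequality `Q' ≥ 2κQ²` the function `Q` is nondecreasing, hence stays
positive, and `t ↦ 1/Q(t) + 2∫₀ᵗ κ` is nonincreasing. Since `1/Q(T) > 0`, this gives
`2∫₀ᵀ κ < 1/Q⁰` for every `T`, and letting `T → ∞` bounds the improper integral. -/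

open Set Filter

section Riccati

variable {Q κ : ℝ → ℝ} {a : ℝ}

lemma monotoneOn_Ici_of_deriv_nonneg (hQ : ∀ t, a ≤ t → DifferentiableAt ℝ Q t)
    (hQ' : ∀ t, a ≤ t → 0 ≤ deriv Q t) : MonotoneOn Q (Ici a) :=
  monotoneOn_of_deriv_nonneg (convex_Ici a)
    (fun t ht => (hQ t ht).continuousAt.continuousWithinAt)
    (fun t ht => (hQ t (interior_subset ht)).differentiableWithinAt)
    (fun t ht => hQ' t (interior_subset ht))

lemma pos_of_riccati (hκ : ∀ t, a ≤ t → 0 ≤ κ t) (hQa : 0 < Q a)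
    (hQ : ∀ t, a ≤ t → DifferentiableAt ℝ Q t)
    (hric : ∀ t, a ≤ t → 2 * κ t * Q t ^ 2 ≤ deriv Q t) {t : ℝ} (ht : a ≤ t) : 0 < Q t := by
  have hmono : MonotoneOn Q (Ici a) := monotoneOn_Ici_of_deriv_nonneg hQ fun s hs =>
    (mul_nonneg (mul_nonneg zero_le_two (hκ s hs)) (sq_nonneg _)).trans (hric s hs)
  exact hQa.trans_le (hmono self_mem_Ici ht ht)

lemma antitoneOn_inv_add_integral_of_riccati (hκ : Continuous κ)
    (hQ : ∀ t, a ≤ t → DifferentiableAt ℝ Q t) (hQpos : ∀ t, a ≤ t → 0 < Q t)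
    (hric : ∀ t, a ≤ t → 2 * κ t * Q t ^ 2 ≤ deriv Q t) :
    AntitoneOn (fun t => (Q t)⁻¹ + 2 * ∫ s in a..t, κ s) (Ici a) := by
  have hderiv : ∀ t, a ≤ t → HasDerivAt (fun t => (Q t)⁻¹ + 2 * ∫ s in a..t, κ s)
      (-deriv Q t / Q t ^ 2 + 2 * κ t) t := fun t ht =>
    ((hQ t ht).hasDerivAt.inv (hQpos t ht).ne').add
      ((hκ.integral_hasStrictDerivAt a t).hasDerivAt.const_mul 2)
  refine antitoneOn_of_hasDerivWithinAt_nonpos (convex_Ici a)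
    (fun t ht => (hderiv t ht).continuousAt.continuousWithinAt)
    (fun t ht => (hderiv t (interior_subset ht)).hasDerivWithinAt) fun t ht => ?_
  have ht : a ≤ t := interior_subset ht
  have hQsq : 0 < Q t ^ 2 := pow_pos (hQpos t ht) 2
  have : 2 * κ t ≤ deriv Q t / Q t ^ 2 := (le_div_iff₀ hQsq).2 (hric t ht)
  rw [neg_div]
  linarith

lemma intervalIntegral_le_of_riccati (hκ : Continuous κ) (hκnn : ∀ t, a ≤ t → 0 ≤ κ t)
    (hQa : 0 < Q a) (hQ : ∀ t, a ≤ t → DifferentiableAt ℝ Q t)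
    (hric : ∀ t, a ≤ t → 2 * κ t * Q t ^ 2 ≤ deriv Q t) {T : ℝ} (hT : a ≤ T) :
    ∫ s in a..T, κ s ≤ 1 / (2 * Q a) := by
  have hQpos : ∀ t, a ≤ t → 0 < Q t := fun t ht => pos_of_riccati hκnn hQa hQ hric ht
  have hanti := antitoneOn_inv_add_integral_of_riccati hκ hQ hQpos hric self_mem_Ici hT hT
  have hQT : 0 < (Q T)⁻¹ := inv_pos.2 (hQpos T hT)
  simp only [intervalIntegral.integral_same, mul_zero, add_zero] at hanti
  rw [one_div, mul_inv, ← div_eq_inv_mul, le_div_iff₀ two_pos]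
  linarith

end Riccati

lemma integral_Ioi_le_of_intervalIntegral_le {f : ℝ → ℝ} {a M : ℝ}
    (h : ∀ T, a ≤ T → ∫ t in a..T, f t ≤ M) : ∫ t in Ioi a, f t ≤ M := by
  by_cases hf : IntegrableOn f (Ioi a)
  · exact le_of_tendsto (intervalIntegral_tendsto_integral_Ioi a hf tendsto_id)
      (eventually_atTop.2 ⟨a, h⟩)
  · rw [integral_undef hf]
    simpa using h a le_rfl

theorem stmt_15_general (Q0 : ℝ) (Q κ : ℝ → ℝ)
    (hQ0 : Q 0 = Q0) (hQ0pos : 0 < Q0)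
    (hκcont : Continuous κ) (hκpos : ∀ t : ℝ, 0 ≤ t → 0 < κ t)
    (hdiff : ∀ t : ℝ, 0 ≤ t → DifferentiableAt ℝ Q t)
    (hderiv : ∀ t : ℝ, 0 ≤ t → 2 * κ t * Q t ^ 2 ≤ deriv Q t) :
    ∫ t in Set.Ioi (0 : ℝ), κ t ≤ 1 / (2 * Q0) := by
  subst hQ0
  exact integral_Ioi_le_of_intervalIntegral_le fun T hT =>
    intervalIntegral_le_of_riccati hκcont (fun t ht => (hκpos t ht).le) hQ0pos hdiff hderiv hT

/-- Analytic core of Theorem 4.9: if `Q' ≥ 2κ(t)Q²` with `Q(0) = Q0 > 0`, `κ`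
continuous and strictly positive, and `Q(t) ≤ C(1+t)²`, then
`∫₀^∞ κ ≤ 1/(2Q0)`. -/
theorem stmt_15 (Q0 C : ℝ) (Q κ : ℝ → ℝ)
    (hQ0 : Q 0 = Q0) (hQ0pos : 0 < Q0)
    (hκcont : Continuous κ) (hκpos : ∀ t : ℝ, 0 ≤ t → 0 < κ t)
    (hdiff : ∀ t : ℝ, 0 ≤ t → DifferentiableAt ℝ Q t)
    (hderiv : ∀ t : ℝ, 0 ≤ t → 2 * κ t * Q t ^ 2 ≤ deriv Q t)
    (hgrowth : ∀ t : ℝ, 0 ≤ t → Q t ≤ C * (1 + t) ^ 2) :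
    ∫ t in Set.Ioi (0 : ℝ), κ t ≤ 1 / (2 * Q0) :=
  stmt_15_general Q0 Q κ hQ0 hQ0pos hκcont hκpos hdiff hderiv
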